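/- arXiv:1605.05463 — 10 statements merged into one kernel-verified Lean document; each statement's English description precedes it below -/
import Mathlib

section
/- If G is a finite group such that a²b² = b²a² and a³b³ = b³a³ for all a, b ∈ G, then G is abelian. -/
/-!
Under the hypotheses, `⁅a², b³⁆ = a² (b³ a⁻¹ b⁻³)² = (a² b a⁻²)³ (b⁻¹)³` is both a product of two
squares and a product of two cubes, so it commutes with every `g²` and `g³`, hence with
`g = g³ (g²)⁻¹`. Thus in `G ⧸ center G` squares also commute with cubes, and the same trick makes
that quotient abelian: `G` has nilpotency class at most two. Then
`⁅a, b⁆ ^ 4 = ⁅a², b²⁆ = 1` and `⁅a, b⁆ ^ 9 = ⁅a³, b³⁆ = 1`, so `⁅a, b⁆ = 1`.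
-/

open Subgroup
open scoped commutatorElement

section

variable {G : Type*} [Group G]

theorem Commute.of_sq_of_cube {a b : G} (h2 : Commute a (b ^ 2)) (h3 : Commute a (b ^ 3)) :
    Commute a b := by
  have hb : b ^ 3 * (b ^ 2)⁻¹ = b := by group
  simpa only [hb] using h3.mul_right h2.inv_right

theorem commute_of_squares_cubes_commute
    (h22 : ∀ a b : G, Commute (a ^ 2) (b ^ 2)) (h33 : ∀ a b : G, Commute (a ^ 3) (b ^ 3))
    (h23 : ∀ a b : G, Commute (a ^ 2) (b ^ 3)) (a b : G) : Commute a b :=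
  (Commute.of_sq_of_cube (Commute.of_sq_of_cube (h22 a b) (h23 a b)).symm
    (Commute.of_sq_of_cube (h23 b a).symm (h33 a b)).symm).symm

section SquaresCubesCommute

variable (h2 : ∀ a b : G, Commute (a ^ 2) (b ^ 2)) (h3 : ∀ a b : G, Commute (a ^ 3) (b ^ 3))
include h2 h3

theorem sq_mul_sq_mem_center_of_eq_cube_mul_cube {s t u v : G}
    (h : s ^ 2 * t ^ 2 = u ^ 3 * v ^ 3) :
    s ^ 2 * t ^ 2 ∈ center G :=
  mem_center_iff.mpr fun g =>
    (Commute.of_sq_of_cube ((h2 s g).mul_left (h2 t g))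
      (h ▸ (h3 u g).mul_left (h3 v g))).symm.eq

theorem commutatorElement_sq_cube_mem_center (a b : G) : ⁅a ^ 2, b ^ 3⁆ ∈ center G := by
  have hsq : ⁅a ^ 2, b ^ 3⁆ = a ^ 2 * (b ^ 3 * a⁻¹ * (b ^ 3)⁻¹) ^ 2 := by
    simp only [commutatorElement_def, pow_succ, pow_zero, one_mul]; group
  have hcube : ⁅a ^ 2, b ^ 3⁆ = (a ^ 2 * b * (a ^ 2)⁻¹) ^ 3 * b⁻¹ ^ 3 := by
    simp only [commutatorElement_def, pow_succ, pow_zero, one_mul]; group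
  rw [hsq] at hcube ⊢
  exact sq_mul_sq_mem_center_of_eq_cube_mul_cube h2 h3 hcube

theorem commutatorElement_mem_center (a b : G) : ⁅a, b⁆ ∈ center G := by
  set f := QuotientGroup.mk' (center G)
  have hf : Function.Surjective f := QuotientGroup.mk'_surjective _
  have hcomm : ∀ x y : G ⧸ center G, Commute x y := by
    refine commute_of_squares_cubes_commute ?_ ?_ ?_ <;>
      refine hf.forall₂.2 fun a b => ?_
    · simpa only [map_pow] using (h2 a b).map f
    · simpa only [map_pow] using (h3 a b).map f
    · rw [← map_pow, ← map_pow, ← commutatorElement_eq_one_iff_commute, ← map_commutatorElement,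
        QuotientGroup.mk'_apply, QuotientGroup.eq_one_iff]
      exact commutatorElement_sq_cube_mem_center h2 h3 a b
  rw [← QuotientGroup.eq_one_iff, ← QuotientGroup.mk'_apply, map_commutatorElement,
    commutatorElement_eq_one_iff_commute]
  exact hcomm _ _

end SquaresCubesCommute

theorem commutatorElement_pow_right_of_mem_center {a b : G} (h : ⁅a, b⁆ ∈ center G) (n : ℕ) :
    ⁅a, b ^ n⁆ = ⁅a, b⁆ ^ n := by
  induction n with
  | zero => simp
  | succ n ih =>
    calc ⁅a, b ^ (n + 1)⁆ = ⁅a, b ^ n⁆ * (b ^ n * ⁅a, b⁆ * (b ^ n)⁻¹) := by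
          simp only [commutatorElement_def, pow_succ]; group
      _ = ⁅a, b⁆ ^ (n + 1) := by
          rw [mem_center_iff.mp h (b ^ n), mul_inv_cancel_right, ih, pow_succ]

theorem commutatorElement_pow_pow_of_mem_center {a b : G} (h : ⁅a, b⁆ ∈ center G) (m n : ℕ) :
    ⁅a ^ m, b ^ n⁆ = ⁅a, b⁆ ^ (m * n) := by
  have hbn : ⁅b ^ n, a⁆ ∈ center G := by
    rw [← commutatorElement_inv, commutatorElement_pow_right_of_mem_center h]
    exact inv_mem (pow_mem h n)
  rw [← commutatorElement_inv, commutatorElement_pow_right_of_mem_center hbn,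
    ← commutatorElement_inv, commutatorElement_pow_right_of_mem_center h, inv_pow, inv_inv,
    pow_mul']

end

theorem squares_cubes_commute_finite_abelian_general (G : Type*) [Group G]
    (h2 : ∀ a b : G, a ^ 2 * b ^ 2 = b ^ 2 * a ^ 2)
    (h3 : ∀ a b : G, a ^ 3 * b ^ 3 = b ^ 3 * a ^ 3) :
    ∀ a b : G, a * b = b * a := by
  intro a b
  have hc := commutatorElement_mem_center h2 h3 a b
  have hc4 : ⁅a, b⁆ ^ 4 = 1 := by
    rw [← commutatorElement_pow_pow_of_mem_center hc 2 2, commutatorElement_eq_one_iff_commute]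
    exact h2 a b
  have hc9 : ⁅a, b⁆ ^ 9 = 1 := by
    rw [← commutatorElement_pow_pow_of_mem_center hc 3 3, commutatorElement_eq_one_iff_commute]
    exact h3 a b
  have hc1 : ⁅a, b⁆ = 1 := by
    calc ⁅a, b⁆ = ⁅a, b⁆ ^ 9 * ((⁅a, b⁆ ^ 4) ^ 2)⁻¹ := by group
      _ = 1 := by rw [hc9, hc4]; group
  exact commutatorElement_eq_one_iff_commute.mp hc1

theorem squares_cubes_commute_finite_abelian (G : Type*) [Group G] [Finite G]
    (h2 : ∀ a b : G, a ^ 2 * b ^ 2 = b ^ 2 * a ^ 2)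
    (h3 : ∀ a b : G, a ^ 3 * b ^ 3 = b ^ 3 * a ^ 3) :
    ∀ a b : G, a * b = b * a :=
  squares_cubes_commute_finite_abelian_general G h2 h3
end

section
/- Let m, n be coprime natural numbers. If G is a finite group such that aᵐbᵐ = bᵐaᵐ and aⁿbⁿ = bⁿaⁿ for all a, b ∈ G, then G is abelian. -/
/-!
By Bézout every element is a product `u ^ m * v ^ n`, so an element commuting with all `m`-th and
all `n`-th powers is central; in particular `a ^ (m * n)` is central. The commutator `z` of `a ^ m`
and `b ^ n` is both a product of two `m`-th powers and a product of two `n`-th powers, hence central.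
Then conjugating `b ^ n` by `a ^ m` multiplies it by `z`, so `z ^ m = 1` because `b ^ (n * m)` is
central, and symmetrically `z ^ n = 1`; thus `z = 1`. So `m`-th powers commute with `n`-th powers,
both kinds of powers are central, and hence so is every element.
-/

open scoped commutatorElement

section

variable {G : Type*} [Group G]

theorem commutatorElement_pow_eq_one_of_commute_pow {x y : G} {k : ℕ}
    (hcomm : Commute ⁅x, y⁆ y) (hk : Commute x (y ^ k)) : ⁅x, y⁆ ^ k = 1 := by
  have hconj : x * y * x⁻¹ = ⁅x, y⁆ * y := by rw [commutatorElement_def]; group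
  have : ⁅x, y⁆ ^ k * y ^ k = y ^ k := by
    rw [← hcomm.mul_pow, ← hconj, conj_pow, hk.eq, mul_inv_cancel_right]
  simpa using this

variable {m n : ℕ}

theorem pow_gcdA_pow_mul_pow_gcdB_pow (hmn : m.Coprime n) (c : G) :
    (c ^ m.gcdA n) ^ m * (c ^ m.gcdB n) ^ n = c := by
  rw [← zpow_natCast, ← zpow_natCast, ← zpow_mul, ← zpow_mul, ← zpow_add, mul_comm _ (m : ℤ),
    mul_comm _ (n : ℤ), ← Nat.gcd_eq_gcd_ab, hmn, Nat.cast_one, zpow_one]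

theorem commute_of_forall_commute_pow (hmn : m.Coprime n) {z : G}
    (hm : ∀ u : G, Commute z (u ^ m)) (hn : ∀ v : G, Commute z (v ^ n)) (c : G) :
    Commute z c := by
  simpa only [pow_gcdA_pow_mul_pow_gcdB_pow hmn] using
    (hm (c ^ m.gcdA n)).mul_right (hn (c ^ m.gcdB n))

theorem commute_pow_mul_of_coprime (hmn : m.Coprime n)
    (hm : ∀ a b : G, Commute (a ^ m) (b ^ m)) (hn : ∀ a b : G, Commute (a ^ n) (b ^ n))
    (g c : G) : Commute (g ^ (m * n)) c :=
  commute_of_forall_commute_pow hmn (fun u => by rw [pow_mul']; exact hm _ u)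
    (fun v => by rw [pow_mul]; exact hn _ v) c

theorem commute_commutatorElement_pow_pow (hmn : m.Coprime n)
    (hm : ∀ a b : G, Commute (a ^ m) (b ^ m)) (hn : ∀ a b : G, Commute (a ^ n) (b ^ n))
    (a b c : G) : Commute ⁅a ^ m, b ^ n⁆ c := by
  have h_prod_m : ⁅a ^ m, b ^ n⁆ = a ^ m * (b ^ n * a⁻¹ * (b ^ n)⁻¹) ^ m := by
    rw [conj_pow, inv_pow, commutatorElement_def]; group
  have h_prod_n : ⁅a ^ m, b ^ n⁆ = (a ^ m * b * (a ^ m)⁻¹) ^ n * b⁻¹ ^ n := by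
    rw [conj_pow, inv_pow, commutatorElement_def]
  refine commute_of_forall_commute_pow hmn (fun u => ?_) (fun v => ?_) c
  · rw [h_prod_m]; exact (hm _ u).mul_left (hm _ u)
  · rw [h_prod_n]; exact (hn _ v).mul_left (hn _ v)

theorem commute_pow_pow_of_coprime (hmn : m.Coprime n)
    (hm : ∀ a b : G, Commute (a ^ m) (b ^ m)) (hn : ∀ a b : G, Commute (a ^ n) (b ^ n))
    (a b : G) : Commute (a ^ m) (b ^ n) := by
  have hz := commute_commutatorElement_pow_pow hmn hm hn a b
  have hz_pow_m : ⁅a ^ m, b ^ n⁆ ^ m = 1 := by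
    refine commutatorElement_pow_eq_one_of_commute_pow (hz _) ?_
    rw [← pow_mul, mul_comm]
    exact (commute_pow_mul_of_coprime hmn hm hn b _).symm
  have hz_pow_n : ⁅a ^ m, b ^ n⁆ ^ n = 1 := by
    rw [← inv_eq_one, ← inv_pow, commutatorElement_inv]
    refine commutatorElement_pow_eq_one_of_commute_pow ?_ ?_
    · rw [← commutatorElement_inv]
      exact (hz _).inv_left
    · rw [← pow_mul]
      exact (commute_pow_mul_of_coprime hmn hm hn a _).symm
  exact commutatorElement_eq_one_iff_commute.mp
    ((pow_eq_one_iff_of_coprime hmn).mp ⟨hz_pow_m, hz_pow_n⟩)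

end

theorem coprime_powers_commute_finite_abelian_general (G : Type*) [Group G]
    (m n : ℕ) (hmn : Nat.Coprime m n)
    (hm : ∀ a b : G, a ^ m * b ^ m = b ^ m * a ^ m)
    (hn : ∀ a b : G, a ^ n * b ^ n = b ^ n * a ^ n) :
    ∀ a b : G, a * b = b * a := by
  have hmn_pow := commute_pow_pow_of_coprime hmn hm hn
  have hm_central : ∀ a c : G, Commute (a ^ m) c := fun a =>
    commute_of_forall_commute_pow hmn (hm a ·) (hmn_pow a)
  have hn_central : ∀ a c : G, Commute (a ^ n) c := fun a =>
    commute_of_forall_commute_pow hmn (fun u => (hmn_pow u a).symm) (hn a ·)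
  intro a b
  exact (commute_of_forall_commute_pow hmn (fun u => (hm_central u a).symm)
    (fun v => (hn_central v a).symm) b).eq

theorem coprime_powers_commute_finite_abelian (G : Type*) [Group G] [Finite G]
    (m n : ℕ) (hmn : Nat.Coprime m n)
    (hm : ∀ a b : G, a ^ m * b ^ m = b ^ m * a ^ m)
    (hn : ∀ a b : G, a ^ n * b ^ n = b ^ n * a ^ n) :
    ∀ a b : G, a * b = b * a :=
  coprime_powers_commute_finite_abelian_general G m n hmn hm hn
end

section
/- Let m, n be coprime natural numbers and G a group satisfying aᵐbᵐ = bᵐaᵐ and aⁿbⁿ = bⁿaⁿ for all a, b ∈ G. Let k be a natural number coprime to at least one of m or n. Then H = {x ∈ G : xᵏ = e} is a normal abelian subgroup of G (i.e., H is a subgroup, H is normal, and any two elements of H commute). -/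
/-
An element `x` with `x ^ k = 1` has order dividing `k`, so when `k` is coprime to `n` the map
`g ↦ g ^ n` is invertible on the cyclic group generated by `x`; in particular `x` is an `n`-th
power. Since `n`-th powers commute pairwise, so do the solutions of `x ^ k = 1`, and then
`(x * y) ^ k = x ^ k * y ^ k` makes them closed under products. Normality holds because
conjugation preserves `x ^ k = 1`.
-/

section

variable {G : Type*} [Group G]

theorem exists_pow_eq_of_pow_eq_one_of_coprime {x : G} {k n : ℕ} (hx : x ^ k = 1)
    (hkn : Nat.Coprime k n) : ∃ g : G, g ^ n = x := by
  have hcop : n.Coprime (orderOf x) := hkn.symm.coprime_dvd_right (orderOf_dvd_of_pow_eq_one hx)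
  obtain ⟨e, he⟩ := exists_pow_eq_self_of_coprime hcop
  exact ⟨x ^ e, by rwa [pow_right_comm]⟩

theorem commute_of_pow_eq_one_of_coprime {k n : ℕ}
    (hn : ∀ a b : G, a ^ n * b ^ n = b ^ n * a ^ n) (hkn : Nat.Coprime k n)
    {x y : G} (hx : x ^ k = 1) (hy : y ^ k = 1) : Commute x y := by
  obtain ⟨a, rfl⟩ := exists_pow_eq_of_pow_eq_one_of_coprime hx hkn
  obtain ⟨b, rfl⟩ := exists_pow_eq_of_pow_eq_one_of_coprime hy hkn
  exact hn a b

def Subgroup.ofPowEqOne (k : ℕ) (hcomm : ∀ x y : G, x ^ k = 1 → y ^ k = 1 → Commute x y) :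
    Subgroup G where
  carrier := {x | x ^ k = 1}
  one_mem' := one_pow k
  mul_mem' {x y} (hx : x ^ k = 1) (hy : y ^ k = 1) := show (x * y) ^ k = 1 by
    rw [(hcomm x y hx hy).mul_pow, hx, hy, one_mul]
  inv_mem' {x} (hx : x ^ k = 1) := show x⁻¹ ^ k = 1 by
    rw [inv_pow, hx, inv_one]

theorem Subgroup.mem_ofPowEqOne {k : ℕ} {hcomm : ∀ x y : G, x ^ k = 1 → y ^ k = 1 → Commute x y}
    {x : G} : x ∈ Subgroup.ofPowEqOne k hcomm ↔ x ^ k = 1 :=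
  Iff.rfl

theorem Subgroup.ofPowEqOne_normal (k : ℕ)
    (hcomm : ∀ x y : G, x ^ k = 1 → y ^ k = 1 → Commute x y) :
    (Subgroup.ofPowEqOne k hcomm).Normal where
  conj_mem x hx g := by
    rw [mem_ofPowEqOne] at hx ⊢
    rw [conj_pow, hx, mul_one, mul_inv_cancel]

end

theorem kth_roots_of_one_form_normal_abelian_subgroup_general (G : Type*) [Group G]
    (m n : ℕ)
    (hm : ∀ a b : G, a ^ m * b ^ m = b ^ m * a ^ m)
    (hn : ∀ a b : G, a ^ n * b ^ n = b ^ n * a ^ n)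
    (k : ℕ) (hk : Nat.Coprime k m ∨ Nat.Coprime k n) :
    ∃ H : Subgroup G, (∀ x : G, x ∈ H ↔ x ^ k = 1) ∧ H.Normal ∧
      ∀ x y : G, x ∈ H → y ∈ H → x * y = y * x := by
  have hcomm : ∀ x y : G, x ^ k = 1 → y ^ k = 1 → Commute x y := fun x y hx hy =>
    hk.elim (fun hkm => commute_of_pow_eq_one_of_coprime hm hkm hx hy)
      (fun hkn => commute_of_pow_eq_one_of_coprime hn hkn hx hy)
  exact ⟨Subgroup.ofPowEqOne k hcomm, fun _ => Subgroup.mem_ofPowEqOne,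
    Subgroup.ofPowEqOne_normal k hcomm, hcomm⟩

theorem kth_roots_of_one_form_normal_abelian_subgroup (G : Type*) [Group G]
    (m n : ℕ) (hmn : Nat.Coprime m n)
    (hm : ∀ a b : G, a ^ m * b ^ m = b ^ m * a ^ m)
    (hn : ∀ a b : G, a ^ n * b ^ n = b ^ n * a ^ n)
    (k : ℕ) (hk : Nat.Coprime k m ∨ Nat.Coprime k n) :
    ∃ H : Subgroup G, (∀ x : G, x ∈ H ↔ x ^ k = 1) ∧ H.Normal ∧
      ∀ x y : G, x ∈ H → y ∈ H → x * y = y * x :=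
  kth_roots_of_one_form_normal_abelian_subgroup_general G m n hm hn k hk
end

section
/- Let m, n be coprime natural numbers, G a group satisfying aᵐbᵐ = bᵐaᵐ and aⁿbⁿ = bⁿaⁿ for all a, b ∈ G, and k a natural number coprime to m. Then any two elements x, y ∈ G with xᵏ = e and yᵏ = e commute. -/
/-!
Since `xᵏ = 1` and `k` is coprime to `m`, the order of `x` is coprime to `m`, so `x` is a power of
`xᵐ` and hence itself an `m`-th power. Any two `m`-th powers commute by hypothesis.
-/

theorem exists_pow_eq_of_pow_eq_one_of_coprime_s3 {M : Type*} [Monoid M] {x : M} {k m : ℕ}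
    (hx : x ^ k = 1) (hk : k.Coprime m) : ∃ z : M, z ^ m = x := by
  have hcop : m.Coprime (orderOf x) := (hk.coprime_dvd_left (orderOf_dvd_of_pow_eq_one hx)).symm
  obtain ⟨j, hj⟩ := exists_pow_eq_self_of_coprime hcop
  exact ⟨x ^ j, by rw [pow_right_comm, hj]⟩

theorem kth_roots_commute_general (G : Type*) [Group G]
    (m : ℕ)
    (hm : ∀ a b : G, a ^ m * b ^ m = b ^ m * a ^ m)
    (k : ℕ) (hk : Nat.Coprime k m)
    (x y : G) (hx : x ^ k = 1) (hy : y ^ k = 1) :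
    x * y = y * x := by
  obtain ⟨a, rfl⟩ := exists_pow_eq_of_pow_eq_one_of_coprime_s3 hx hk
  obtain ⟨b, rfl⟩ := exists_pow_eq_of_pow_eq_one_of_coprime_s3 hy hk
  exact hm a b

theorem kth_roots_commute (G : Type*) [Group G]
    (m n : ℕ) (hmn : Nat.Coprime m n)
    (hm : ∀ a b : G, a ^ m * b ^ m = b ^ m * a ^ m)
    (hn : ∀ a b : G, a ^ n * b ^ n = b ^ n * a ^ n)
    (k : ℕ) (hk : Nat.Coprime k m)
    (x y : G) (hx : x ^ k = 1) (hy : y ^ k = 1) :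
    x * y = y * x :=
  kth_roots_commute_general G m hm k hk x y hx hy
end

section
/- Let G be a finite group and p a prime with p^α the exact power of p dividing |G|. If the set G_{p^α} = {x ∈ G : x^{p^α} = e} is a subgroup of G, then G has a unique Sylow p-subgroup P, and P = G_{p^α}. -/
/-! Every Sylow `p`-subgroup has order `p ^ α`, so it lies in `G_{p^α}`; as `G_{p^α}` is then a
`p`-subgroup, maximality of Sylow subgroups forces every Sylow subgroup to equal it. -/

namespace Sylow

variable {G : Type*} [Group G] [Finite G] {p : ℕ} [Fact p.Prime]

theorem pow_prime_pow_factorization_eq_one (P : Sylow p G) {x : G} (hx : x ∈ P) :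
    x ^ p ^ (Nat.card G).factorization p = 1 := by
  have hpow : (⟨x, hx⟩ : P) ^ Nat.card P = 1 := pow_card_eq_one'
  rw [P.card_eq_multiplicity] at hpow
  exact congrArg Subtype.val hpow

theorem coe_eq_of_coe_eq_setOf_pow_eq_one {H : Subgroup G}
    (hH : (H : Set G) = {x : G | x ^ p ^ (Nat.card G).factorization p = 1}) (P : Sylow p G) :
    (P : Subgroup G) = H := by
  have hHp : IsPGroup p H := fun g =>
    ⟨_, Subtype.ext (by simpa [hH] using (SetLike.mem_coe.mpr g.2 : (g : G) ∈ (H : Set G)))⟩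
  have hPH : (P : Subgroup G) ≤ H := fun x hx => by
    rw [← SetLike.mem_coe, hH]
    exact P.pow_prime_pow_factorization_eq_one hx
  exact (P.is_maximal' hHp hPH).symm

end Sylow

theorem subgroup_of_p_power_roots_is_unique_sylow (G : Type*) [Group G] [Finite G]
    (p : ℕ) [Fact p.Prime] (α : ℕ) (hα : α = (Nat.card G).factorization p)
    (hH : ∃ H : Subgroup G, (H : Set G) = {x : G | x ^ p ^ α = 1}) :
    (∀ P Q : Sylow p G, P = Q) ∧
      ∀ P : Sylow p G, ((P : Subgroup G) : Set G) = {x : G | x ^ p ^ α = 1} := by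
  subst hα
  obtain ⟨H, hH⟩ := hH
  have hPH (P : Sylow p G) : (P : Subgroup G) = H := P.coe_eq_of_coe_eq_setOf_pow_eq_one hH
  exact ⟨fun P Q => Sylow.ext ((hPH P).trans (hPH Q).symm), fun P => by rw [hPH P, hH]⟩
end

section
/- Let m, n be coprime natural numbers and G a finite group satisfying aᵐbᵐ = bᵐaᵐ and aⁿbⁿ = bⁿaⁿ for all a, b ∈ G. Then for every prime p dividing |G|, G has a unique (hence normal) Sylow p-subgroup. -/
/-!
The subgroups `A` and `B` generated by the `m`-th and by the `n`-th powers are normal and, by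
hypothesis, abelian; by Bézout every element is a product `(g ^ m) ^ u * (g ^ n) ^ v`, so
`A ⊔ B = G`. Elements of `A ⊓ B` commute with both `A` and `B`, hence are central, and
`⁅A, B⁆ ≤ A ⊓ B`. Modulo the centre `A` and `B` therefore commute elementwise and generate an
abelian group, so `G` is nilpotent of class at most two. In a finite nilpotent group every Sylow
subgroup is normal, hence unique.
-/

namespace Subgroup

variable {G : Type*} [Group G]

instance normal_closure_range_pow (k : ℕ) : (closure (Set.range (· ^ k : G → G))).Normal := by
  rw [← normalizer_eq_top_iff, eq_top_iff, le_normalizer_closure_iff]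
  rintro g - _ ⟨a, rfl⟩
  exact subset_closure ⟨g * a * g⁻¹, conj_pow⟩

theorem isMulCommutative_closure_range_pow {k : ℕ}
    (hk : ∀ a b : G, a ^ k * b ^ k = b ^ k * a ^ k) :
    IsMulCommutative (closure (Set.range (· ^ k : G → G))) :=
  isMulCommutative_closure (by rintro _ ⟨a, rfl⟩ _ ⟨b, rfl⟩; exact hk a b)

theorem closure_range_pow_sup_eq_top {m n : ℕ} (hmn : m.Coprime n) :
    closure (Set.range (· ^ m : G → G)) ⊔ closure (Set.range (· ^ n : G → G)) = ⊤ := by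
  refine eq_top_iff.mpr fun g _ => ?_
  have hg : g = (g ^ m) ^ m.gcdA n * (g ^ n) ^ m.gcdB n := by
    rw [← zpow_natCast, ← zpow_natCast, ← zpow_mul, ← zpow_mul, ← zpow_add, ← Nat.gcd_eq_gcd_ab,
      hmn.gcd_eq_one, Nat.cast_one, zpow_one]
  rw [hg]
  exact mul_mem_sup (zpow_mem (subset_closure (Set.mem_range_self g)) _)
    (zpow_mem (subset_closure (Set.mem_range_self g)) _)

theorem commutator_sup_self_eq_bot {H K : Subgroup G} (hH : ⁅H, H⁆ = ⊥) (hK : ⁅K, K⁆ = ⊥)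
    (hHK : ⁅H, K⁆ = ⊥) : ⁅H ⊔ K, H ⊔ K⁆ = ⊥ := by
  rw [commutator_eq_bot_iff_le_centralizer] at *
  have hKH : K ≤ centralizer H := le_centralizer_iff.mp hHK
  refine sup_le ?_ ?_ <;> rw [le_centralizer_iff] <;> exact sup_le ‹_› ‹_›

theorem commutator_sup_self_le {H K N : Subgroup G} [N.Normal] (hH : ⁅H, H⁆ ≤ N)
    (hK : ⁅K, K⁆ ≤ N) (hHK : ⁅H, K⁆ ≤ N) : ⁅H ⊔ K, H ⊔ K⁆ ≤ N := by
  -- pass to `G ⧸ N`, where all three commutators become trivial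
  simp only [← QuotientGroup.ker_mk' N, ← map_eq_bot_iff, map_commutator, map_sup] at *
  exact commutator_sup_self_eq_bot hH hK hHK

theorem inf_le_center_of_sup_eq_top {A B : Subgroup G} [IsMulCommutative A] [IsMulCommutative B]
    (hAB : A ⊔ B = ⊤) : A ⊓ B ≤ center G := by
  rw [← centralizer_univ, ← coe_top, le_centralizer_iff, ← hAB]
  exact sup_le ((le_centralizer A).trans (centralizer_le inf_le_left))
    ((le_centralizer B).trans (centralizer_le inf_le_right))

theorem isNilpotent_of_sup_eq_top {A B : Subgroup G} [A.Normal] [B.Normal] [IsMulCommutative A]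
    [IsMulCommutative B] (hAB : A ⊔ B = ⊤) : Group.IsNilpotent G := by
  have hcomm : ⁅(⊤ : Subgroup G), ⊤⁆ ≤ center G := by
    rw [← hAB]
    exact commutator_sup_self_le ((commutator_self_eq_bot_iff.mpr ‹_›).trans_le bot_le)
      ((commutator_self_eq_bot_iff.mpr ‹_›).trans_le bot_le)
      ((commutator_le_inf A B).trans (inf_le_center_of_sup_eq_top hAB))
  exact nilpotent_iff_lowerCentralSeries.mpr
    ⟨2, commutator_top_right_eq_bot_iff_le_center.mpr hcomm⟩

end Subgroup

open Subgroup in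
theorem isNilpotent_of_coprime_powers_commute {G : Type*} [Group G] {m n : ℕ}
    (hmn : m.Coprime n) (hm : ∀ a b : G, a ^ m * b ^ m = b ^ m * a ^ m)
    (hn : ∀ a b : G, a ^ n * b ^ n = b ^ n * a ^ n) : Group.IsNilpotent G :=
  have := isMulCommutative_closure_range_pow hm
  have := isMulCommutative_closure_range_pow hn
  isNilpotent_of_sup_eq_top (closure_range_pow_sup_eq_top hmn)

theorem sylow_unique_of_coprime_powers_commute_general (G : Type*) [Group G] [Finite G]
    (m n : ℕ) (hmn : Nat.Coprime m n)
    (hm : ∀ a b : G, a ^ m * b ^ m = b ^ m * a ^ m)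
    (hn : ∀ a b : G, a ^ n * b ^ n = b ^ n * a ^ n)
    (p : ℕ) [Fact p.Prime] :
    ∀ P Q : Sylow p G, P = Q := by
  have := isNilpotent_of_coprime_powers_commute hmn hm hn
  intro P Q
  have := Sylow.unique_of_normal P inferInstance
  exact Subsingleton.elim P Q

theorem sylow_unique_of_coprime_powers_commute (G : Type*) [Group G] [Finite G]
    (m n : ℕ) (hmn : Nat.Coprime m n)
    (hm : ∀ a b : G, a ^ m * b ^ m = b ^ m * a ^ m)
    (hn : ∀ a b : G, a ^ n * b ^ n = b ^ n * a ^ n)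
    (p : ℕ) [Fact p.Prime] (hp : p ∣ Nat.card G) :
    ∀ P Q : Sylow p G, P = Q :=
  sylow_unique_of_coprime_powers_commute_general G m n hmn hm hn p
end

section
/- Let m, n be coprime natural numbers and G a finite group satisfying aᵐbᵐ = bᵐaᵐ and aⁿbⁿ = bⁿaⁿ for all a, b ∈ G. Then every Sylow p-subgroup of G is abelian. -/
/-!
If `j`-th powers commute in a group whose order is prime to `j`, then the group is abelian,
since `x ↦ x ^ j` is a bijection. A prime `p` cannot divide both of the coprime numbers `m` and
`n`, so the order of a Sylow `p`-subgroup is prime to one of them.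
-/

theorem mul_comm_of_pow_mul_pow_comm {H : Type*} [Group H] {j : ℕ}
    (hj : (Nat.card H).Coprime j) (hcomm : ∀ a b : H, a ^ j * b ^ j = b ^ j * a ^ j)
    (x y : H) : x * y = y * x := by
  obtain ⟨a, rfl⟩ := (powCoprime hj).surjective x
  obtain ⟨b, rfl⟩ := (powCoprime hj).surjective y
  exact hcomm a b

theorem IsPGroup.card_coprime_of_not_dvd {p : ℕ} [Fact p.Prime] {H : Type*} [Group H] [Finite H]
    (hH : IsPGroup p H) {j : ℕ} (hj : ¬ p ∣ j) : (Nat.card H).Coprime j := by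
  obtain ⟨k, hk⟩ := hH.exists_card_eq
  rw [hk]
  exact ((Nat.Prime.coprime_iff_not_dvd Fact.out).mpr hj).pow_left k

theorem Nat.Coprime.not_dvd_or_not_dvd {m n p : ℕ} (hmn : m.Coprime n) (hp : p.Prime) :
    ¬ p ∣ m ∨ ¬ p ∣ n := by
  by_contra! h
  exact hp.not_dvd_one (hmn.gcd_eq_one ▸ Nat.dvd_gcd h.1 h.2)

theorem Sylow.mul_comm_of_pow_mul_pow_comm {G : Type*} [Group G] [Finite G] {p : ℕ}
    [Fact p.Prime] (P : Sylow p G) {j : ℕ} (hj : ¬ p ∣ j)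
    (hcomm : ∀ a b : G, a ^ j * b ^ j = b ^ j * a ^ j) {x y : G}
    (hx : x ∈ (P : Subgroup G)) (hy : y ∈ (P : Subgroup G)) : x * y = y * x :=
  congrArg Subtype.val <|
    _root_.mul_comm_of_pow_mul_pow_comm (P.isPGroup'.card_coprime_of_not_dvd hj)
      (fun a b => Subtype.ext (hcomm a b)) ⟨x, hx⟩ ⟨y, hy⟩

theorem sylow_abelian_of_coprime_powers_commute (G : Type*) [Group G] [Finite G]
    (m n : ℕ) (hmn : Nat.Coprime m n)
    (hm : ∀ a b : G, a ^ m * b ^ m = b ^ m * a ^ m)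
    (hn : ∀ a b : G, a ^ n * b ^ n = b ^ n * a ^ n)
    (p : ℕ) [Fact p.Prime] (P : Sylow p G) :
    ∀ x y : G, x ∈ (P : Subgroup G) → y ∈ (P : Subgroup G) → x * y = y * x := by
  intro x y hx hy
  rcases hmn.not_dvd_or_not_dvd (p := p) Fact.out with hpm | hpn
  · exact P.mul_comm_of_pow_mul_pow_comm hpm hm hx hy
  · exact P.mul_comm_of_pow_mul_pow_comm hpn hn hx hy
end

section
/- Let m, n be coprime natural numbers and G any group satisfying aᵐbᵐ = bᵐaᵐ and aⁿbⁿ = bⁿaⁿ for all a, b ∈ G. Then any two torsion elements of G commute. -/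
/-!
If `a` commutes with its conjugate `b a b⁻¹` and `b` with `a b a⁻¹` (as happens when `a` is an
`m`-th power and `b` an `n`-th power), then the commutator `⁅a, b⁆` commutes with both, so its
order divides both `orderOf a` and `orderOf b`; for coprime orders it is trivial.
A torsion element `x` splits as `u * v` with `orderOf u` prime to `m` and `orderOf v` dividing a
power of `m`: then `u` is an `m`-th power, `v` an `n`-th power, and the orders of the `u`-part of
one element and the `v`-part of another are coprime, so all four pairs of parts commute.
-/

theorem Nat.exists_mul_coprime_dvd_pow (m : ℕ) {k : ℕ} (hk : k ≠ 0) :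
    ∃ a b, a * b = k ∧ a.Coprime m ∧ ∃ j, b ∣ m ^ j := by
  induction k using Nat.strong_induction_on with
  | _ k ih =>
  by_cases hkm : k.Coprime m
  · exact ⟨k, 1, mul_one k, hkm, 0, one_dvd _⟩
  have hd : 1 < k.gcd m := by
    have := Nat.gcd_pos_of_pos_left m (Nat.pos_of_ne_zero hk)
    exact lt_of_le_of_ne this (Ne.symm hkm)
  have hdk : k.gcd m ∣ k := Nat.gcd_dvd_left k m
  obtain ⟨a, b, hab, ha, j, hb⟩ := ih (k / k.gcd m)
    (Nat.div_lt_self (Nat.pos_of_ne_zero hk) hd)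
    (Nat.div_ne_zero_iff_of_dvd hdk |>.mpr ⟨hk, by omega⟩)
  refine ⟨a, k.gcd m * b, ?_, ha, j + 1, ?_⟩
  · rw [mul_left_comm, hab, Nat.mul_div_cancel' hdk]
  · rw [pow_succ']
    exact mul_dvd_mul (Nat.gcd_dvd_right k m) hb

section

open scoped commutatorElement

variable {G : Type*} [Group G]

theorem IsOfFinOrder.exists_mul_coprime_orderOf_dvd_pow {x : G} (hx : IsOfFinOrder x) (m : ℕ) :
    ∃ u v : G, x = u * v ∧ (orderOf u).Coprime m ∧ ∃ j, orderOf v ∣ m ^ j := by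
  obtain ⟨a, b, hab, ha, j, hb⟩ := Nat.exists_mul_coprime_dvd_pow m hx.orderOf_pos.ne'
  obtain ⟨s, t, hst⟩ := Nat.isCoprime_iff_coprime.mpr ((ha.pow_right j).coprime_dvd_right hb)
  have hpow_eq_one : ∀ r : ℤ, x ^ (r * a * b) = 1 := fun r ↦
    orderOf_dvd_iff_zpow_eq_one.mp ⟨r, by rw [← hab]; push_cast; ring⟩
  refine ⟨x ^ (t * b), x ^ (s * a), ?_, ?_, j, ?_⟩
  · rw [← zpow_add, add_comm, hst, zpow_one]
  · refine Nat.Coprime.coprime_dvd_left (orderOf_dvd_of_pow_eq_one ?_) ha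
    rw [← zpow_natCast, ← zpow_mul, mul_right_comm, hpow_eq_one]
  · refine dvd_trans (orderOf_dvd_of_pow_eq_one ?_) hb
    rw [← zpow_natCast, ← zpow_mul, hpow_eq_one]

theorem exists_pow_eq_of_coprime_orderOf {x : G} {m : ℕ} (h : (orderOf x).Coprime m) :
    ∃ w : G, w ^ m = x := by
  obtain ⟨k, hk⟩ := exists_pow_eq_self_of_coprime h.symm
  exact ⟨x ^ k, by rw [← pow_mul, mul_comm, pow_mul, hk]⟩

theorem orderOf_commutatorElement_dvd_orderOf_right {a b : G} (h : Commute b (a * b * a⁻¹)) :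
    orderOf ⁅a, b⁆ ∣ orderOf b := by
  have hc : ⁅a, b⁆ = a * b * a⁻¹ * b⁻¹ := commutatorElement_def a b
  have hcomm : Commute ⁅a, b⁆ b := hc ▸ h.symm.mul_left (Commute.refl b).inv_left
  refine orderOf_dvd_of_pow_eq_one ?_
  have key : ⁅a, b⁆ ^ orderOf b * b ^ orderOf b = a * b ^ orderOf b * a⁻¹ := by
    rw [← hcomm.mul_pow, ← conj_pow, hc, inv_mul_cancel_right]
  simpa [pow_orderOf_eq_one] using key

theorem commute_of_coprime_orderOf {a b : G} (ha : Commute a (b * a * b⁻¹))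
    (hb : Commute b (a * b * a⁻¹)) (hab : (orderOf a).Coprime (orderOf b)) : Commute a b := by
  have hdvd_a : orderOf ⁅a, b⁆ ∣ orderOf a := by
    rw [← orderOf_inv, commutatorElement_inv]
    exact orderOf_commutatorElement_dvd_orderOf_right ha
  have hdvd_b := orderOf_commutatorElement_dvd_orderOf_right hb
  rw [← commutatorElement_eq_one_iff_commute, ← orderOf_eq_one_iff]
  exact Nat.eq_one_of_dvd_coprimes hab hdvd_a hdvd_b

theorem commute_pow_pow_of_coprime_orderOf {m n : ℕ} (hm : ∀ a b : G, Commute (a ^ m) (b ^ m))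
    (hn : ∀ a b : G, Commute (a ^ n) (b ^ n)) {α β : G}
    (h : (orderOf (α ^ m)).Coprime (orderOf (β ^ n))) : Commute (α ^ m) (β ^ n) :=
  commute_of_coprime_orderOf (by rw [← conj_pow]; exact hm _ _)
    (by rw [← conj_pow]; exact hn _ _) h

end

theorem torsion_elements_commute (G : Type*) [Group G]
    (m n : ℕ) (hmn : Nat.Coprime m n)
    (hm : ∀ a b : G, a ^ m * b ^ m = b ^ m * a ^ m)
    (hn : ∀ a b : G, a ^ n * b ^ n = b ^ n * a ^ n)
    (x y : G) (hx : IsOfFinOrder x) (hy : IsOfFinOrder y) :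
    x * y = y * x := by
  obtain ⟨u, v, rfl, hu, j, hv⟩ := hx.exists_mul_coprime_orderOf_dvd_pow m
  obtain ⟨u', v', rfl, hu', j', hv'⟩ := hy.exists_mul_coprime_orderOf_dvd_pow m
  have huv' : (orderOf u).Coprime (orderOf v') := (hu.pow_right j').coprime_dvd_right hv'
  have hu'v : (orderOf u').Coprime (orderOf v) := (hu'.pow_right j).coprime_dvd_right hv
  obtain ⟨α, rfl⟩ := exists_pow_eq_of_coprime_orderOf hu
  obtain ⟨α', rfl⟩ := exists_pow_eq_of_coprime_orderOf hu'
  obtain ⟨β, rfl⟩ := exists_pow_eq_of_coprime_orderOf ((hmn.pow_left j).coprime_dvd_left hv)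
  obtain ⟨β', rfl⟩ := exists_pow_eq_of_coprime_orderOf ((hmn.pow_left j').coprime_dvd_left hv')
  have hm : ∀ a b : G, Commute (a ^ m) (b ^ m) := hm
  have hn : ∀ a b : G, Commute (a ^ n) (b ^ n) := hn
  exact ((hm α α').mul_right (commute_pow_pow_of_coprime_orderOf hm hn huv')).mul_left
    ((commute_pow_pow_of_coprime_orderOf hm hn hu'v).symm.mul_right (hn β β'))
end

section
/- Let m, n be coprime natural numbers and G a group satisfying aᵐbᵐ = bᵐaᵐ and aⁿbⁿ = bⁿaⁿ for all a, b ∈ G. If every element of G has order a power of a fixed prime p (G is a p-group), then G is abelian. -/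
/-! In a `p`-group the `r`-th power map is a bijection whenever `p ∤ r`, so if `r`-th powers
commute then all elements commute. As `m` and `n` are coprime, the prime `p` fails to divide one
of them. -/

theorem commute_of_pow_surjective {M : Type*} [Monoid M] {r : ℕ}
    (hsurj : Function.Surjective fun x : M => x ^ r)
    (hr : ∀ a b : M, a ^ r * b ^ r = b ^ r * a ^ r) (a b : M) : a * b = b * a := by
  obtain ⟨c, rfl⟩ := hsurj a
  obtain ⟨d, rfl⟩ := hsurj b
  exact hr c d

theorem IsPGroup.commute_of_pow_commute {p : ℕ} {G : Type*} [Group G] (hG : IsPGroup p G)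
    {r : ℕ} (hpr : p.Coprime r) (hr : ∀ a b : G, a ^ r * b ^ r = b ^ r * a ^ r) (a b : G) :
    a * b = b * a :=
  commute_of_pow_surjective (hG.powEquiv hpr).surjective hr a b

theorem Nat.Prime.coprime_or_coprime_of_coprime {p m n : ℕ} (hp : p.Prime)
    (hmn : m.Coprime n) : p.Coprime m ∨ p.Coprime n := by
  simp only [hp.coprime_iff_not_dvd, ← not_and_or]
  rintro ⟨hpm, hpn⟩
  exact hp.one_lt.ne' (Nat.eq_one_of_dvd_coprimes hmn hpm hpn)

theorem pgroup_abelian_of_coprime_powers_commute (G : Type*) [Group G]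
    (m n : ℕ) (hmn : Nat.Coprime m n)
    (hm : ∀ a b : G, a ^ m * b ^ m = b ^ m * a ^ m)
    (hn : ∀ a b : G, a ^ n * b ^ n = b ^ n * a ^ n)
    (p : ℕ) (hp : p.Prime) (hG : IsPGroup p G) :
    ∀ a b : G, a * b = b * a := by
  rcases hp.coprime_or_coprime_of_coprime hmn with hpm | hpn
  · exact hG.commute_of_pow_commute hpm hm
  · exact hG.commute_of_pow_commute hpn hn
end

section
/- Let p be a prime and m, n coprime natural numbers. Every group G that is residually a finite p-group and satisfies aᵐbᵐ = bᵐaᵐ and aⁿbⁿ = bⁿaⁿ for all a, b ∈ G is abelian. -/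
section

variable {G H : Type*} [Group G] [Group H]

theorem pow_mul_pow_comm_of_surjective (f : G →* H) (hf : Function.Surjective f) {k : ℕ}
    (hk : ∀ a b : G, a ^ k * b ^ k = b ^ k * a ^ k) (x y : H) :
    x ^ k * y ^ k = y ^ k * x ^ k := by
  obtain ⟨a, rfl⟩ := hf x
  obtain ⟨b, rfl⟩ := hf y
  simpa only [map_pow, map_mul] using congrArg f (hk a b)

theorem mul_comm_of_pow_surjective {k : ℕ} (hsurj : Function.Surjective (· ^ k : G → G))
    (hk : ∀ a b : G, a ^ k * b ^ k = b ^ k * a ^ k) (x y : G) : x * y = y * x := by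
  obtain ⟨a, rfl⟩ := hsurj x
  obtain ⟨b, rfl⟩ := hsurj y
  exact hk a b

theorem IsPGroup.mul_comm_of_coprime_powers_commute {p : ℕ} (hG : IsPGroup p G) (hp : p.Prime)
    {m n : ℕ} (hmn : m.Coprime n) (hm : ∀ a b : G, a ^ m * b ^ m = b ^ m * a ^ m)
    (hn : ∀ a b : G, a ^ n * b ^ n = b ^ n * a ^ n) (x y : G) : x * y = y * x := by
  rcases hp.coprime_or_coprime_of_coprime hmn with hpm | hpn
  · exact mul_comm_of_pow_surjective (hG.powEquiv hpm).surjective hm x y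
  · exact mul_comm_of_pow_surjective (hG.powEquiv hpn).surjective hn x y

end

theorem residually_p_abelian_of_coprime_powers_commute (G : Type*) [Group G]
    (p : ℕ) (hp : p.Prime)
    (m n : ℕ) (hmn : Nat.Coprime m n)
    (hres : ∀ g : G, g ≠ 1 →
      ∃ N : Subgroup G, ∃ _ : N.Normal, g ∉ N ∧ Finite (G ⧸ N) ∧ IsPGroup p (G ⧸ N))
    (hm : ∀ a b : G, a ^ m * b ^ m = b ^ m * a ^ m)
    (hn : ∀ a b : G, a ^ n * b ^ n = b ^ n * a ^ n) :
    ∀ a b : G, a * b = b * a := by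
  intro a b
  by_contra hab
  obtain ⟨N, _, hN, -, hpN⟩ := hres ((b * a)⁻¹ * (a * b)) (mt inv_mul_eq_one.mp (Ne.symm hab))
  have hcomm := hpN.mul_comm_of_coprime_powers_commute hp hmn
    (pow_mul_pow_comm_of_surjective _ (QuotientGroup.mk'_surjective N) hm)
    (pow_mul_pow_comm_of_surjective _ (QuotientGroup.mk'_surjective N) hn)
  exact hN (QuotientGroup.eq.mp (hcomm b a))
end
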